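/- Let n and k be positive integers, z a k-coloring of {1,…,n}, and K a field. For every nonzero γ ∈ ker_ℤ DC_{n,z}, setting f = x^{γ⁺} − x^{γ⁻}, there exist f' ∈ I_{M_{n,z}} and γ'' ∈ ker_ℤ DC_{n,z} such that, with f'' = x^{γ''⁺} − x^{γ''⁻}, one has f = f' + f'', deg(f'') = deg(f), and there exist vertices u, v, w ∈ {1,…,n} with z(u) = z(w) such that γ''_{uv} and γ''_{vw} are both nonzero and of opposite signs. -/

import Mathlib

open Finset

/-- The set `P` of 2-element subsets of `{1,…,n}`, encoded as ordered pairs. -/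
abbrev Edge (n : ℕ) : Type := {p : Fin n × Fin n // p.1 < p.2}

/-- Entry `γ_{uv}` of a vector `γ ∈ ℤ^P` at the unordered pair `{u,v}` (0 when `u = v`). -/
def ent {n : ℕ} (γ : Edge n → ℤ) (u v : Fin n) : ℤ :=
  if h : u < v then γ ⟨(u, v), h⟩ else if h : v < u then γ ⟨(v, u), h⟩ else 0

/-- Entry at `{u,v}` of a vector in `ℕ^P`. -/
def entN {n : ℕ} (x : Edge n → ℕ) (u v : Fin n) : ℕ :=
  if h : u < v then x ⟨(u, v), h⟩ else if h : v < u then x ⟨(v, u), h⟩ else 0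

/-- Degree sequence: `d(γ)_u = ∑_{v ≠ u} γ_{uv}`. -/
def degSeq {n : ℕ} (γ : Edge n → ℤ) (u : Fin n) : ℤ := ∑ v, ent γ u v

/-- Color sequence: `c(γ)_{ij} = ∑ γ_{uv}` over `{u,v} ∈ P` with `{z u, z v} = {i,j}`. -/
def colorSeq {n k : ℕ} (z : Fin n → Fin k) (γ : Edge n → ℤ) (i j : Fin k) : ℤ :=
  ∑ e : Edge n,
    if (z e.1.1 = i ∧ z e.1.2 = j) ∨ (z e.1.1 = j ∧ z e.1.2 = i) then γ e else 0

/-- `γ ∈ ker_ℤ DC_{n,z}`: both the degree sequence and the color sequence vanish. -/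
def inKer {n k : ℕ} (z : Fin n → Fin k) (γ : Edge n → ℤ) : Prop :=
  (∀ u, degSeq γ u = 0) ∧ ∀ i j, colorSeq z γ i j = 0

/-- The 1-norm `‖γ‖₁ = ∑_{e ∈ P} |γ_e|`. -/
def norm1 {n : ℕ} (γ : Edge n → ℤ) : ℤ := ∑ e, |γ e|

/-- The set of moves `M_{n,z} = {γ ∈ ker_ℤ DC_{n,z} : ‖γ‖₁ = 4}`. -/
def MSet {n k : ℕ} (z : Fin n → Fin k) : Set (Edge n → ℤ) :=
  {γ | inKer z γ ∧ norm1 γ = 4}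

/-- Degree sequence of a vector in `ℕ^P`. -/
def degSeqN {n : ℕ} (x : Edge n → ℕ) (u : Fin n) : ℕ := ∑ v, entN x u v

/-- Color sequence of a vector in `ℕ^P`. -/
def colorSeqN {n k : ℕ} (z : Fin n → Fin k) (x : Edge n → ℕ) (i j : Fin k) : ℕ :=
  ∑ e : Edge n,
    if (z e.1.1 = i ∧ z e.1.2 = j) ∨ (z e.1.1 = j ∧ z e.1.2 = i) then x e else 0

/-- The fiber `F(b) = {x ∈ ℕ^P : DC_{n,z} x = b}`, where `b = (d; c)`. -/
def Fiber {n k : ℕ} (z : Fin n → Fin k) (d : Fin n → ℤ) (c : Fin k → Fin k → ℤ) :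
    Set (Edge n → ℕ) :=
  {x | (∀ u, (degSeqN x u : ℤ) = d u) ∧ ∀ i j, (colorSeqN z x i j : ℤ) = c i j}

/-- The simple fiber `F̃(b) = F(b) ∩ {0,1}^P`. -/
def SimpleFiber {n k : ℕ} (z : Fin n → Fin k) (d : Fin n → ℤ) (c : Fin k → Fin k → ℤ) :
    Set (Edge n → ℕ) :=
  {x | x ∈ Fiber z d c ∧ ∀ e, x e ≤ 1}

/-- The difference `x − x' ∈ ℤ^P` of two vectors in `ℕ^P`. -/
def diff {n : ℕ} (x x' : Edge n → ℕ) : Edge n → ℤ := fun e => (x e : ℤ) - (x' e : ℤ)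

/-- The monomial map `φ_β : x_{uv} ↦ s_u s_v t_{z(u)z(v)}` defining the toric ideal. -/
noncomputable def phiBeta (K : Type*) [Field K] {n k : ℕ} (z : Fin n → Fin k) :
    MvPolynomial (Edge n) K →ₐ[K] MvPolynomial (Fin n ⊕ Fin k × Fin k) K :=
  MvPolynomial.aeval fun e =>
    MvPolynomial.X (Sum.inl e.1.1) * MvPolynomial.X (Sum.inl e.1.2) *
      MvPolynomial.X (Sum.inr (min (z e.1.1) (z e.1.2), max (z e.1.1) (z e.1.2)))

/-- The exponent vector `γ⁺ = max(γ, 0)`. -/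
noncomputable def expPos {n : ℕ} (γ : Edge n → ℤ) : Edge n →₀ ℕ :=
  Finsupp.equivFunOnFinite.symm fun e => (γ e).toNat

/-- The exponent vector `γ⁻ = max(−γ, 0)`. -/
noncomputable def expNeg {n : ℕ} (γ : Edge n → ℤ) : Edge n →₀ ℕ :=
  Finsupp.equivFunOnFinite.symm fun e => (-γ e).toNat

/-- The binomial `x^{γ⁺} − x^{γ⁻}` associated to `γ ∈ ℤ^P`. -/
noncomputable def binom (K : Type*) [Field K] {n : ℕ} (γ : Edge n → ℤ) :
    MvPolynomial (Edge n) K :=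
  MvPolynomial.monomial (expPos γ) (1 : K) - MvPolynomial.monomial (expNeg γ) (1 : K)

/-- The variable `x_{ab}` for an unordered pair `{a,b}` with `a ≠ b`. -/
noncomputable def edgeVar (K : Type*) [Field K] {n : ℕ} (a b : Fin n) :
    MvPolynomial (Edge n) K :=
  if h : a < b then MvPolynomial.X ⟨(a, b), h⟩
  else if h : b < a then MvPolynomial.X ⟨(b, a), h⟩ else 1

/-!
Suppose `γ` has no walk `u-v-w` with `z u = z w` whose edges have opposite signs (otherwise take
`f' = 0`). Choose `γ_{vw} < 0 < γ_{va}` and, as the colour class `{z v, z w}` of `γ` sums to zero,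
an edge `p-q` of that class with `γ_{pq} > 0`. The absence of such walks pins down enough signs
that the square move `δ = e_{av} + e_{pq} - e_{ap} - e_{vq}` fits under `γ`: `x^{δ⁺}` divides
`x^{γ⁺}`, so `f - x^μ (x^{δ⁺} - x^{δ⁻})` is the binomial of `γ - δ`, which has the same `γ⁻` and
the same degree, and in which `q-v-w` is a walk of the required kind. When `p = a` the same
argument is run for `-γ`.
-/

section Entries

variable {n : ℕ}

lemma ent_self (γ : Edge n → ℤ) (u : Fin n) : ent γ u u = 0 := by
  simp [ent]

lemma ent_comm (γ : Edge n → ℤ) (u v : Fin n) : ent γ u v = ent γ v u := by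
  unfold ent
  rcases lt_trichotomy u v with h | rfl | h
  · rw [dif_pos h, dif_neg h.asymm, dif_pos h]
  · rfl
  · rw [dif_neg h.asymm, dif_pos h, dif_pos h]

lemma ent_fst_snd (γ : Edge n → ℤ) (e : Edge n) : ent γ e.1.1 e.1.2 = γ e := by
  simp [ent, e.2]

lemma ent_eq_of_mk_eq (γ : Edge n → ℤ) {e : Edge n} {a b : Fin n}
    (h : s(e.1.1, e.1.2) = s(a, b)) : γ e = ent γ a b := by
  rcases Sym2.eq_iff.mp h with ⟨ha, hb⟩ | ⟨ha, hb⟩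
  · rw [← ha, ← hb, ent_fst_snd]
  · rw [← ha, ← hb, ent_comm, ent_fst_snd]

@[simp] lemma ent_neg (γ : Edge n → ℤ) (u v : Fin n) : ent (-γ) u v = -ent γ u v := by
  unfold ent; split_ifs <;> simp

@[simp] lemma ent_add (γ δ : Edge n → ℤ) (u v : Fin n) :
    ent (γ + δ) u v = ent γ u v + ent δ u v := by
  unfold ent; split_ifs <;> simp

@[simp] lemma ent_sub (γ δ : Edge n → ℤ) (u v : Fin n) :
    ent (γ - δ) u v = ent γ u v - ent δ u v := by
  unfold ent; split_ifs <;> simp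

end Entries

section Kernel

variable {n k : ℕ} {z : Fin n → Fin k}

lemma degSeq_neg (γ : Edge n → ℤ) (u : Fin n) : degSeq (-γ) u = -degSeq γ u := by
  simp [degSeq]

lemma degSeq_add (γ δ : Edge n → ℤ) (u : Fin n) :
    degSeq (γ + δ) u = degSeq γ u + degSeq δ u := by
  simp [degSeq, Finset.sum_add_distrib]

lemma degSeq_sub (γ δ : Edge n → ℤ) (u : Fin n) :
    degSeq (γ - δ) u = degSeq γ u - degSeq δ u := by
  simp [degSeq]

lemma colorSeq_neg (γ : Edge n → ℤ) (i j : Fin k) : colorSeq z (-γ) i j = -colorSeq z γ i j := by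
  simp only [colorSeq, ← Finset.sum_neg_distrib]
  congr! 1 with e
  split_ifs <;> simp

lemma colorSeq_add (γ δ : Edge n → ℤ) (i j : Fin k) :
    colorSeq z (γ + δ) i j = colorSeq z γ i j + colorSeq z δ i j := by
  simp only [colorSeq, ← Finset.sum_add_distrib]
  congr! 1 with e
  split_ifs <;> simp

lemma colorSeq_sub (γ δ : Edge n → ℤ) (i j : Fin k) :
    colorSeq z (γ - δ) i j = colorSeq z γ i j - colorSeq z δ i j := by
  simp only [colorSeq, ← Finset.sum_sub_distrib]
  congr! 1 with e
  split_ifs <;> simp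

lemma inKer.neg {γ : Edge n → ℤ} (hγ : inKer z γ) : inKer z (-γ) :=
  ⟨fun u => by rw [degSeq_neg, hγ.1, neg_zero], fun i j => by rw [colorSeq_neg, hγ.2, neg_zero]⟩

lemma inKer.sub {γ δ : Edge n → ℤ} (hγ : inKer z γ) (hδ : inKer z δ) : inKer z (γ - δ) :=
  ⟨fun u => by rw [degSeq_sub, hγ.1, hδ.1, sub_zero],
    fun i j => by rw [colorSeq_sub, hγ.2, hδ.2, sub_zero]⟩

end Kernel

section Indicator

variable {n k : ℕ}

lemma Edge.mk_injective : Function.Injective fun e : Edge n => s(e.1.1, e.1.2) := by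
  rintro ⟨⟨a, b⟩, hab⟩ ⟨⟨c, d⟩, hcd⟩ h
  rcases Sym2.eq_iff.mp h with ⟨rfl, rfl⟩ | ⟨rfl, rfl⟩
  · rfl
  · exact absurd hab hcd.asymm

def Edge.ofNe {a b : Fin n} (h : a ≠ b) : Edge n :=
  if hl : a < b then ⟨(a, b), hl⟩ else ⟨(b, a), h.lt_or_gt.resolve_left hl⟩

lemma Edge.mk_ofNe {a b : Fin n} (h : a ≠ b) :
    s((Edge.ofNe h).1.1, (Edge.ofNe h).1.2) = s(a, b) := by
  unfold Edge.ofNe; split_ifs <;> simp [Sym2.eq_swap]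

lemma Edge.mk_eq_iff {a b : Fin n} (h : a ≠ b) (e : Edge n) :
    s(e.1.1, e.1.2) = s(a, b) ↔ e = Edge.ofNe h := by
  rw [← Edge.mk_ofNe h]
  exact Edge.mk_injective.eq_iff

def edgeIndicator (a b : Fin n) : Edge n → ℤ := fun e => if s(e.1.1, e.1.2) = s(a, b) then 1 else 0

variable {a b : Fin n}

lemma ent_edgeIndicator (hab : a ≠ b) (u v : Fin n) :
    ent (edgeIndicator a b) u v = if s(u, v) = s(a, b) then 1 else 0 := by
  unfold ent edgeIndicator
  rcases lt_trichotomy u v with h | rfl | h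
  · simp [h]
  · simp only [lt_irrefl, dite_false, Sym2.eq_iff]
    grind
  · simp [h, h.asymm, Sym2.eq_swap]

lemma sum_edgeIndicator_mul (hab : a ≠ b) (f : Edge n → ℤ) :
    ∑ e, edgeIndicator a b e * f e = f (Edge.ofNe hab) := by
  simp [edgeIndicator, Edge.mk_eq_iff hab]

lemma sum_edgeIndicator (hab : a ≠ b) : ∑ e, edgeIndicator a b e = 1 := by
  simpa using sum_edgeIndicator_mul hab 1

lemma degSeq_edgeIndicator (hab : a ≠ b) (u : Fin n) :
    degSeq (edgeIndicator a b) u = (if u = a then 1 else 0) + (if u = b then 1 else 0) := by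
  simp only [degSeq, ent_edgeIndicator hab, Sym2.eq_iff]
  by_cases hua : u = a
  · subst hua; simp [hab]
  by_cases hub : u = b
  · subst hub; simp [hua]
  simp [hua, hub]

lemma colorSeq_edgeIndicator (z : Fin n → Fin k) (hab : a ≠ b) (i j : Fin k) :
    colorSeq z (edgeIndicator a b) i j = if s(z a, z b) = s(i, j) then 1 else 0 := by
  have hcolor : s(z (Edge.ofNe hab).1.1, z (Edge.ofNe hab).1.2) = s(z a, z b) := by
    simpa using congrArg (Sym2.map z) (Edge.mk_ofNe hab)
  simp only [colorSeq, ← Sym2.eq_iff]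
  rw [← hcolor,
    ← sum_edgeIndicator_mul hab fun e => if s(z e.1.1, z e.1.2) = s(i, j) then 1 else 0]
  congr! 1 with e
  split_ifs <;> simp

end Indicator

section SquareMove

variable {n k : ℕ} {a b c d : Fin n}

def squareMove (a b c d : Fin n) : Edge n → ℤ :=
  edgeIndicator a b + edgeIndicator c d - edgeIndicator a c - edgeIndicator b d

lemma ent_squareMove (hab : a ≠ b) (hcd : c ≠ d) (hac : a ≠ c) (hbd : b ≠ d) (u v : Fin n) :
    ent (squareMove a b c d) u v =
      (if s(u, v) = s(a, b) then 1 else 0) + (if s(u, v) = s(c, d) then 1 else 0)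
        - (if s(u, v) = s(a, c) then 1 else 0) - (if s(u, v) = s(b, d) then 1 else 0) := by
  simp [squareMove, ent_edgeIndicator, hab, hcd, hac, hbd]

lemma inKer_squareMove (z : Fin n → Fin k) (hab : a ≠ b) (hcd : c ≠ d) (hac : a ≠ c)
    (hbd : b ≠ d) (hbc : z b = z c) : inKer z (squareMove a b c d) := by
  refine ⟨fun u => ?_, fun i j => ?_⟩
  · rw [squareMove, degSeq_sub, degSeq_sub, degSeq_add, degSeq_edgeIndicator hab,
      degSeq_edgeIndicator hcd, degSeq_edgeIndicator hac, degSeq_edgeIndicator hbd]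
    ring
  · rw [squareMove, colorSeq_sub, colorSeq_sub, colorSeq_add, colorSeq_edgeIndicator z hab,
      colorSeq_edgeIndicator z hcd, colorSeq_edgeIndicator z hac, colorSeq_edgeIndicator z hbd,
      hbc]
    ring

lemma norm1_squareMove (hab : a ≠ b) (hcd : c ≠ d) (hac : a ≠ c) (hbd : b ≠ d) (had : a ≠ d)
    (hbc : b ≠ c) : norm1 (squareMove a b c d) = 4 := by
  have habs : ∀ e, |squareMove a b c d e| =
      edgeIndicator a b e + edgeIndicator c d e + edgeIndicator a c e + edgeIndicator b d e := by
    intro e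
    simp only [squareMove, Pi.add_apply, Pi.sub_apply, edgeIndicator]
    generalize s(e.1.1, e.1.2) = x
    split_ifs <;> grind [Sym2.eq_iff]
  simp only [norm1, habs, Finset.sum_add_distrib, sum_edgeIndicator hab, sum_edgeIndicator hcd,
    sum_edgeIndicator hac, sum_edgeIndicator hbd]
  norm_num

lemma sum_squareMove (hab : a ≠ b) (hcd : c ≠ d) (hac : a ≠ c) (hbd : b ≠ d) :
    ∑ e, squareMove a b c d e = 0 := by
  simp only [squareMove, Pi.add_apply, Pi.sub_apply, Finset.sum_add_distrib,
    Finset.sum_sub_distrib, sum_edgeIndicator hab, sum_edgeIndicator hcd, sum_edgeIndicator hac,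
    sum_edgeIndicator hbd]
  norm_num

lemma squareMove_mem_MSet (z : Fin n → Fin k) (hab : a ≠ b) (hcd : c ≠ d) (hac : a ≠ c)
    (hbd : b ≠ d) (had : a ≠ d) (hbc : b ≠ c) (hz : z b = z c) :
    squareMove a b c d ∈ MSet z :=
  ⟨inKer_squareMove z hab hcd hac hbd hz, norm1_squareMove hab hcd hac hbd had hbc⟩

end SquareMove

section Binomial

variable {n : ℕ} (K : Type*) [Field K] {γ δ : Edge n → ℤ}

@[simp] lemma expPos_apply (γ : Edge n → ℤ) (e : Edge n) : expPos γ e = (γ e).toNat := by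
  simp [expPos]

@[simp] lemma expNeg_apply (γ : Edge n → ℤ) (e : Edge n) : expNeg γ e = (-γ e).toNat := by
  simp [expNeg]

lemma binom_neg (γ : Edge n → ℤ) : binom K (-γ) = -binom K γ := by
  have hpos : expPos (-γ) = expNeg γ := by ext; simp
  have hneg : expNeg (-γ) = expPos γ := by ext; simp
  rw [binom, binom, hpos, hneg, neg_sub]

lemma degree_expPos_eq_degree_expNeg (h : ∑ e, δ e = 0) :
    (expPos δ).degree = (expNeg δ).degree := by
  have hint : ((expPos δ).degree : ℤ) - (expNeg δ).degree = ∑ e, δ e := by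
    simp [Finsupp.degree_eq_sum, ← Finset.sum_sub_distrib]
  omega

lemma totalDegree_binom (h : γ ≠ 0) :
    (binom K γ).totalDegree = max (expPos γ).degree (expNeg γ).degree := by
  obtain ⟨e, he⟩ := Function.ne_iff.mp h
  have hne : expPos γ ≠ expNeg γ := fun hpn => by
    have := DFunLike.congr_fun hpn e
    simp only [expPos_apply, expNeg_apply] at this
    simp only [Pi.zero_apply] at he
    omega
  have hdeg : ∀ s : Edge n →₀ ℕ, (MvPolynomial.monomial s (1 : K)).totalDegree = s.degree :=
    fun s => MvPolynomial.totalDegree_monomial s one_ne_zero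
  apply le_antisymm
  · simpa only [binom, hdeg] using MvPolynomial.totalDegree_sub
      (MvPolynomial.monomial (expPos γ) (1 : K)) (MvPolynomial.monomial (expNeg γ) 1)
  · refine max_le (MvPolynomial.le_totalDegree ?_) (MvPolynomial.le_totalDegree ?_) <;>
      simp [binom, MvPolynomial.coeff_monomial, hne, hne.symm]

def Fits (δ γ : Edge n → ℤ) : Prop :=
  ∀ e, (0 < δ e → δ e ≤ γ e) ∧ (δ e < 0 → 0 ≤ γ e)

variable {K}

lemma Fits.expPos_le (h : Fits δ γ) : expPos δ ≤ expPos γ := fun e => by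
  have := h e; simp only [expPos_apply]; omega

lemma Fits.expPos_sub (h : Fits δ γ) : expPos (γ - δ) = expPos γ - expPos δ + expNeg δ := by
  ext e; have := h e; simp only [Finsupp.add_apply, Finsupp.tsub_apply, expPos_apply,
    expNeg_apply, Pi.sub_apply]; omega

lemma Fits.expNeg_sub (h : Fits δ γ) : expNeg (γ - δ) = expNeg γ := by
  ext e; have := h e; simp only [expNeg_apply, Pi.sub_apply]; omega

lemma Fits.binom_eq (h : Fits δ γ) :
    binom K γ = MvPolynomial.monomial (expPos γ - expPos δ) 1 * binom K δ + binom K (γ - δ) := by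
  conv_lhs => rw [binom, ← tsub_add_cancel_of_le h.expPos_le]
  rw [binom, binom, h.expPos_sub, h.expNeg_sub, mul_sub, MvPolynomial.monomial_mul,
    MvPolynomial.monomial_mul, one_mul]
  ring

lemma Fits.degree_expPos_sub (h : Fits δ γ) (hsum : ∑ e, δ e = 0) :
    (expPos (γ - δ)).degree = (expPos γ).degree := by
  conv_rhs => rw [← tsub_add_cancel_of_le h.expPos_le]
  rw [h.expPos_sub, map_add, map_add, degree_expPos_eq_degree_expNeg hsum]

lemma fits_squareMove {a b c d : Fin n} (hne : s(a, b) ≠ s(c, d)) (h₁ : 1 ≤ ent γ a b)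
    (h₂ : 1 ≤ ent γ c d) (h₃ : 0 ≤ ent γ a c) (h₄ : 0 ≤ ent γ b d) :
    Fits (squareMove a b c d) γ := by
  intro e
  have hγe : ∀ x y, s(e.1.1, e.1.2) = s(x, y) → γ e = ent γ x y := fun x y => ent_eq_of_mk_eq γ
  simp only [squareMove, Pi.add_apply, Pi.sub_apply, edgeIndicator]
  generalize s(e.1.1, e.1.2) = x at hγe
  split_ifs <;> grind

end Binomial

lemma exists_pos_of_sum_eq_zero {ι M : Type*} [Fintype ι] [AddCommMonoid M] [LinearOrder M]
    [IsOrderedCancelAddMonoid M] {f : ι → M} (h : ∑ i, f i = 0) {j : ι} (hj : f j < 0) :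
    ∃ i, 0 < f i := by
  by_contra! hle
  have := Finset.sum_lt_sum (s := Finset.univ) (fun i _ => hle i) ⟨j, Finset.mem_univ j, hj⟩
  simp [h] at this

section Walks

variable {n k : ℕ} {z : Fin n → Fin k} {γ : Edge n → ℤ} {u v w : Fin n}

lemma exists_ent_pos_of_neg (hu : degSeq γ u = 0) (hv : ent γ u v < 0) : ∃ w, 0 < ent γ u w :=
  exists_pos_of_sum_eq_zero hu hv

lemma exists_ent_neg_of_pos (hu : degSeq γ u = 0) (hv : 0 < ent γ u v) : ∃ w, ent γ u w < 0 := by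
  obtain ⟨w, hw⟩ := exists_ent_pos_of_neg (γ := -γ) (by rw [degSeq_neg, hu, neg_zero])
    (by rwa [ent_neg, neg_lt_zero])
  exact ⟨w, by simpa using hw⟩

lemma exists_ent_neg (hγ : ∀ u, degSeq γ u = 0) (h : γ ≠ 0) : ∃ u v, ent γ u v < 0 := by
  obtain ⟨e, he⟩ := Function.ne_iff.mp h
  rcases (show γ e ≠ 0 from he).lt_or_gt with hneg | hpos
  · exact ⟨e.1.1, e.1.2, by rwa [ent_fst_snd]⟩
  · exact ⟨e.1.1, exists_ent_neg_of_pos (hγ _) (by rwa [ent_fst_snd])⟩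

lemma exists_ent_pos_of_colorSeq (h : colorSeq z γ (z v) (z w) = 0) (hvw : ent γ v w < 0) :
    ∃ p q, 0 < ent γ p q ∧ z p = z v ∧ z q = z w := by
  have hne : v ≠ w := by rintro rfl; simp [ent_self] at hvw
  simp only [colorSeq, ← Sym2.eq_iff] at h
  obtain ⟨e, he⟩ := exists_pos_of_sum_eq_zero h (j := Edge.ofNe hne) (by
    have hcolor := congrArg (Sym2.map z) (Edge.mk_ofNe hne)
    simp only [Sym2.map_mk] at hcolor
    rwa [if_pos hcolor, ent_eq_of_mk_eq γ (Edge.mk_ofNe hne)])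
  split_ifs at he with hcolor
  · rcases Sym2.eq_iff.mp hcolor with ⟨h1, h2⟩ | ⟨h1, h2⟩
    · exact ⟨e.1.1, e.1.2, by rwa [ent_fst_snd], h1, h2⟩
    · exact ⟨e.1.2, e.1.1, by rwa [ent_comm, ent_fst_snd], h2, h1⟩
  · exact absurd he (lt_irrefl 0)

def HasGoodSubwalk (z : Fin n → Fin k) (γ : Edge n → ℤ) : Prop :=
  ∃ u v w, z u = z w ∧ ent γ u v * ent γ v w < 0

lemma hasGoodSubwalk_neg_iff : HasGoodSubwalk z (-γ) ↔ HasGoodSubwalk z γ := by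
  simp [HasGoodSubwalk]

lemma HasGoodSubwalk.ne_zero (h : HasGoodSubwalk z γ) : γ ≠ 0 := by
  rintro rfl
  obtain ⟨u, v, w, -, h⟩ := h
  simp [ent] at h

lemma nonneg_of_not_hasGoodSubwalk (h : ¬HasGoodSubwalk z γ) (hz : z u = z w)
    (huv : 0 < ent γ u v) : 0 ≤ ent γ v w := by
  by_contra! hvw
  exact h ⟨u, v, w, hz, mul_neg_of_pos_of_neg huv hvw⟩

end Walks

section Rewriting

variable {n k : ℕ} {K : Type*} [Field K] {z : Fin n → Fin k} {γ δ : Edge n → ℤ}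

variable (K z) in
def RewritesToGoodSubwalk (γ : Edge n → ℤ) : Prop :=
  ∃ f' ∈ Ideal.span {f : MvPolynomial (Edge n) K | ∃ δ ∈ MSet z, f = binom K δ},
    ∃ γ'' : Edge n → ℤ, inKer z γ'' ∧ binom K γ = f' + binom K γ'' ∧
      (binom K γ'').totalDegree = (binom K γ).totalDegree ∧ HasGoodSubwalk z γ''

lemma RewritesToGoodSubwalk.of_neg (h : RewritesToGoodSubwalk K z (-γ)) :
    RewritesToGoodSubwalk K z γ := by
  obtain ⟨f', hf', γ'', hker, heq, hdeg, hgood⟩ := h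
  refine ⟨-f', neg_mem hf', -γ'', hker.neg, ?_, ?_, hasGoodSubwalk_neg_iff.mpr hgood⟩
  · rw [binom_neg] at heq ⊢
    linear_combination -heq
  · simpa only [binom_neg, MvPolynomial.totalDegree_neg] using hdeg

lemma rewritesToGoodSubwalk_of_fits (hγ : inKer z γ) (hγ0 : γ ≠ 0) (hδ : δ ∈ MSet z)
    (hsum : ∑ e, δ e = 0) (hfit : Fits δ γ) (hgood : HasGoodSubwalk z (γ - δ)) :
    RewritesToGoodSubwalk K z γ := by
  refine ⟨_, Ideal.mul_mem_left _ _ (Ideal.subset_span ⟨δ, hδ, rfl⟩), γ - δ, hγ.sub hδ.1,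
    hfit.binom_eq, ?_, hgood⟩
  rw [totalDegree_binom K hgood.ne_zero, totalDegree_binom K hγ0, hfit.degree_expPos_sub hsum,
    hfit.expNeg_sub]

lemma rewritesToGoodSubwalk_of_not_hasGoodSubwalk {v w a p q : Fin n} (hγ : inKer z γ)
    (hcoh : ¬HasGoodSubwalk z γ) (hvw : ent γ v w < 0) (hva : 0 < ent γ v a)
    (hpq : 0 < ent γ p q) (hzp : z p = z v) (hzq : z q = z w) (hpa : p ≠ a) :
    RewritesToGoodSubwalk K z γ := by
  have hav : a ≠ v := by rintro rfl; simp [ent_self] at hva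
  have haw : a ≠ w := by rintro rfl; exact hvw.not_gt hva
  have hpq' : p ≠ q := by rintro rfl; simp [ent_self] at hpq
  have hqa : q ≠ a := by
    rintro rfl
    exact (nonneg_of_not_hasGoodSubwalk hcoh hzq (by rwa [ent_comm])).not_gt hvw
  have hpv : p ≠ v := by
    rintro rfl
    exact (nonneg_of_not_hasGoodSubwalk hcoh hzq (by rwa [ent_comm])).not_gt hvw
  have hqv : q ≠ v := by
    rintro rfl
    exact (nonneg_of_not_hasGoodSubwalk hcoh (hzp.trans hzq) hpq).not_gt hvw
  have hvq : 0 ≤ ent γ v q := by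
    rw [ent_comm]; exact nonneg_of_not_hasGoodSubwalk hcoh hzp hpq
  have hqw : q ≠ w := by rintro rfl; exact hvw.not_ge hvq
  have hap : 0 ≤ ent γ a p := nonneg_of_not_hasGoodSubwalk hcoh hzp.symm hva
  have hfit : Fits (squareMove a v p q) γ :=
    fits_squareMove (by simp [hpa.symm, hqa.symm])
      (by rw [ent_comm]; exact hva) hpq hap hvq
  refine rewritesToGoodSubwalk_of_fits hγ (fun h => by simp [h, ent] at hvw)
    (squareMove_mem_MSet z hav hpq' hpa.symm hqv.symm hqa.symm hpv.symm hzp.symm)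
    (sum_squareMove hav hpq' hpa.symm hqv.symm) hfit ⟨q, v, w, hzq, ?_⟩
  have hqv_new : ent (γ - squareMove a v p q) q v = ent γ v q + 1 := by
    simp [ent_squareMove hav hpq' hpa.symm hqv.symm, hqa, hqv, hpv.symm, hpq'.symm, ent_comm γ q v]
  have hvw_new : ent (γ - squareMove a v p q) v w = ent γ v w := by
    simp [ent_squareMove hav hpq' hpa.symm hqv.symm, hav.symm, haw.symm, hpv.symm, hqv.symm,
      hqw.symm]
  rw [hqv_new, hvw_new]
  exact mul_neg_of_pos_of_neg (by omega) hvw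

end Rewriting

theorem exists_rewrite_with_good_subwalk_general (n k : ℕ)
    (z : Fin n → Fin k) (K : Type*) [Field K]
    (γ : Edge n → ℤ) (hγ : inKer z γ) (hne : γ ≠ 0) :
    ∃ f' ∈ Ideal.span {f : MvPolynomial (Edge n) K | ∃ δ ∈ MSet z, f = binom K δ},
      ∃ γ'' : Edge n → ℤ, inKer z γ'' ∧
        binom K γ = f' + binom K γ'' ∧
        (binom K γ'').totalDegree = (binom K γ).totalDegree ∧
        ∃ u v w : Fin n, z u = z w ∧ ent γ'' u v * ent γ'' v w < 0 := by
  show RewritesToGoodSubwalk K z γ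
  by_cases hgood : HasGoodSubwalk z γ
  · exact ⟨0, zero_mem _, γ, hγ, (zero_add _).symm, rfl, hgood⟩
  obtain ⟨v, w, hvw⟩ := exists_ent_neg hγ.1 hne
  obtain ⟨a, hva⟩ := exists_ent_pos_of_neg (hγ.1 v) hvw
  obtain ⟨p, q, hpq, hzp, hzq⟩ := exists_ent_pos_of_colorSeq (hγ.2 _ _) hvw
  by_cases hpa : p = a
  · subst hpa
    obtain ⟨r, hr⟩ := exists_ent_neg_of_pos (hγ.1 p) (by rwa [ent_comm] at hva)
    have hvr : v ≠ r := by rintro rfl; rw [ent_comm] at hr; exact hr.not_gt hva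
    -- the same argument for `-γ`, with negative edge `p-q`, positive edge `p-r`, class edge `v-w`
    refine .of_neg (rewritesToGoodSubwalk_of_not_hasGoodSubwalk (p := v) (q := w) hγ.neg
      (by rwa [hasGoodSubwalk_neg_iff]) ?_ ?_ ?_ hzp.symm hzq.symm hvr) <;> simpa
  · exact rewritesToGoodSubwalk_of_not_hasGoodSubwalk hγ hgood hvw hva hpq hzp hzq hpa

/-- For every nonzero `γ ∈ ker_ℤ DC_{n,z}`, the binomial
`f = x^{γ⁺} − x^{γ⁻}` can be written as `f = f' + f''` with `f' ∈ I_{M_{n,z}}`,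
`f'' = x^{γ''⁺} − x^{γ''⁻}` with `γ'' ∈ ker_ℤ DC_{n,z}`, `deg f'' = deg f`, and
`γ''` containing a subwalk `u v w` with `z u = z w` whose two edges have opposite signs. -/
theorem exists_rewrite_with_good_subwalk (n k : ℕ) (hn : 0 < n) (hk : 0 < k)
    (z : Fin n → Fin k) (K : Type*) [Field K]
    (γ : Edge n → ℤ) (hγ : inKer z γ) (hne : γ ≠ 0) :
    ∃ f' ∈ Ideal.span {f : MvPolynomial (Edge n) K | ∃ δ ∈ MSet z, f = binom K δ},
      ∃ γ'' : Edge n → ℤ, inKer z γ'' ∧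
        binom K γ = f' + binom K γ'' ∧
        (binom K γ'').totalDegree = (binom K γ).totalDegree ∧
        ∃ u v w : Fin n, z u = z w ∧ ent γ'' u v * ent γ'' v w < 0 :=
  exists_rewrite_with_good_subwalk_general n k z K γ hγ hne
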